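/- For a bivector P (an alternating bilinear form on V*) and a subspace Σ ⊆ V*, the graph E_{(P,Σ)} = {(i(σ)P, σ) : σ ∈ Σ} is g-isotropic in V ⊕ V*, and its g-orthogonal is E′_{(P,Σ)} = {(i(β)P + Y, β) : β ∈ V*, Y ∈ ann Σ}, where ann Σ = {Y ∈ V : β(Y) = 0 for all β ∈ Σ}. -/

import Mathlib

/-! The pairing of `(♯σ, σ)` with any `Q = (X, β)` is `½ σ(X - ♯β)`, because skew-symmetry of `P`
makes `β(♯σ) = -σ(♯β)`. Taking `Q = (♯τ, τ)` gives isotropy, and `Q` is orthogonal to the graph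
exactly when `X - ♯β` lies in the annihilator of `Σ`. -/

/-- The neutral metric `g((X,α),(Y,β)) = (1/2)(α(Y) + β(X))` on `V ⊕ V*`. -/
noncomputable def bigG (V : Type*) [AddCommGroup V] [Module ℝ V]
    (P Q : V × Module.Dual ℝ V) : ℝ :=
  (1 / 2) * (P.2 Q.1 + Q.2 P.1)

theorem Module.Dual.apply_sharp_eq_neg {R M : Type*} [CommRing R] [AddCommGroup M] [Module R M]
    {P : Module.Dual R M →ₗ[R] Module.Dual R M →ₗ[R] R} {sharp : Module.Dual R M →ₗ[R] M}
    (halt : ∀ σ τ : Module.Dual R M, P σ τ = - P τ σ)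
    (hsharp : ∀ σ β : Module.Dual R M, β (sharp σ) = P σ β) (σ β : Module.Dual R M) :
    σ (sharp β) = - β (sharp σ) := by
  rw [hsharp, hsharp, halt]

theorem bigG_sharp_graph_left {V : Type*} [AddCommGroup V] [Module ℝ V]
    {sharp : Module.Dual ℝ V →ₗ[ℝ] V}
    (hskew : ∀ σ β : Module.Dual ℝ V, σ (sharp β) = - β (sharp σ))
    (σ : Module.Dual ℝ V) (Q : V × Module.Dual ℝ V) :
    bigG V (sharp σ, σ) Q = (1 / 2) * σ (Q.1 - sharp Q.2) := by
  rw [bigG, map_sub, hskew]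
  ring

/-- For a bivector `P` (alternating bilinear form on `V*`) with associated map
`♯_P` (characterized by `β(♯_P σ) = P(σ,β)`) and a subspace `Σ ⊆ V*`, the
graph `E_{(P,Σ)} = {(♯_P σ, σ) : σ ∈ Σ}` is `g`-isotropic and its
`g`-orthogonal is `E′_{(P,Σ)} = {(♯_P β + Y, β) : β ∈ V*, Y ∈ ann Σ}`. -/
theorem graph_sharp_isotropic_orthogonal (V : Type*) [AddCommGroup V]
    [Module ℝ V]
    (P : Module.Dual ℝ V →ₗ[ℝ] Module.Dual ℝ V →ₗ[ℝ] ℝ)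
    (halt : ∀ σ τ : Module.Dual ℝ V, P σ τ = - P τ σ)
    (sharp : Module.Dual ℝ V →ₗ[ℝ] V)
    (hsharp : ∀ σ β : Module.Dual ℝ V, β (sharp σ) = P σ β)
    (Sg : Submodule ℝ (Module.Dual ℝ V)) :
    (∀ σ ∈ Sg, ∀ τ ∈ Sg, bigG V (sharp σ, σ) (sharp τ, τ) = 0) ∧
    {Q : V × Module.Dual ℝ V | ∀ σ ∈ Sg, bigG V (sharp σ, σ) Q = 0}
      = {Q : V × Module.Dual ℝ V |
          ∃ Y : V, (∀ σ ∈ Sg, σ Y = 0) ∧ Q.1 = sharp Q.2 + Y} := by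
  have hpair := bigG_sharp_graph_left (Module.Dual.apply_sharp_eq_neg halt hsharp)
  refine ⟨fun σ _ τ _ => by rw [hpair, sub_self, map_zero, mul_zero], ?_⟩
  ext Q
  simp only [Set.mem_ofPred_eq, hpair, mul_eq_zero, one_div, inv_eq_zero, OfNat.ofNat_ne_zero,
    false_or]
  constructor
  · intro hQ
    exact ⟨Q.1 - sharp Q.2, hQ, (add_sub_cancel _ _).symm⟩
  · rintro ⟨Y, hY, hQ1⟩
    rwa [hQ1, add_sub_cancel_left]
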